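/- arXiv:1111.3376 — 2 statements merged into one kernel-verified Lean document; each statement's English description precedes it below -/
import Mathlib

section
/- Let f_1,…,f_M ∈ ℝ^N satisfy ‖f_i‖ = γ for all i, where γ > 0, and |⟨f_i,f_j⟩| ≤ μγ² for all i ≠ j, with μ ≥ 0. Let 𝒦 ⊆ {1,…,M} be a coalition with |𝒦| = K ≥ 1, let σ > 0, and let ε be a random vector in ℝ^N whose N coordinates are i.i.d. Gaussian N(0,σ²). Consider the uniform attack z := (1/K) Σ_{k∈𝒦} f_k + ε, the test statistic T_m(z) := ⟨z, f_m⟩/γ², and the threshold τ* := (1+μ)/(2K). Then, with b := (γ/(2σK))(1 − (2K−1)μ): for every m ∉ 𝒦 the probability that T_m(z) ≥ τ* is at most Q(b), and for every m ∈ 𝒦 the probability that T_m(z) < τ* is at most Q(b). -/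
open MeasureTheory ProbabilityTheory
open scoped RealInnerProductSpace

/-- Interpret a plain vector in `Fin n → ℝ` as an element of Euclidean space
(so that `‖·‖` is the Euclidean norm and `⟪·,·⟫` the Euclidean inner product). -/
noncomputable def euc {n : ℕ} (v : Fin n → ℝ) : EuclideanSpace ℝ (Fin n) :=
  (WithLp.equiv 2 (Fin n → ℝ)).symm v

/-- The law of a random vector in `ℝ^N` whose `N` coordinates are
i.i.d. Gaussian `N(0, σ²)`. -/
noncomputable def iidGaussian (N : ℕ) (σ : ℝ) : Measure (Fin N → ℝ) :=
  Measure.pi fun _ : Fin N => gaussianReal 0 ⟨σ ^ 2, sq_nonneg σ⟩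

/-- The standard Gaussian tail function `Q(x)`, as the measure of `[x, ∞)`
under the standard Gaussian measure `N(0,1)` on `ℝ`. -/
noncomputable def gaussQ (x : ℝ) : ENNReal := gaussianReal 0 1 (Set.Ici x)

open scoped NNReal

/-! The statistic splits as a deterministic part `⟪K⁻¹ • ∑ k ∈ 𝒦, f k, f m⟫ / γ²` plus the
noise term `⟪ε, f m⟫ / γ²`, which is `N(0, σ² / γ²)` because the standard Gaussian on
`EuclideanSpace` has one-dimensional marginals `N(0, ‖v‖²)`. Coherence bounds the deterministic
part above by `μ` when `m ∉ 𝒦` and below by `(1 - (K - 1) μ) / K` when `m ∈ 𝒦`; the threshold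
`τ*` is at distance `(1 - (2K - 1) μ) / (2K)` from both bounds, which is `b` in units of the
noise standard deviation `σ / γ`. -/

lemma stdGaussian_map_inner {E : Type*} [NormedAddCommGroup E] [InnerProductSpace ℝ E]
    [FiniteDimensional ℝ E] [MeasurableSpace E] [BorelSpace E] (v : E) :
    (stdGaussian E).map (fun x => ⟪v, x⟫) = gaussianReal 0 (‖v‖₊ ^ 2) := by
  have h := IsGaussian.map_eq_gaussianReal (μ := stdGaussian E) (innerSL ℝ v)
  rw [integral_strongDual_stdGaussian, variance_dual_stdGaussian, innerSL_apply_norm] at h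
  rwa [Real.toNNReal_pow (norm_nonneg _), norm_toNNReal] at h

lemma iidGaussian_eq_map_smul (N : ℕ) (σ : ℝ) :
    iidGaussian N σ = (Measure.pi fun _ : Fin N => gaussianReal 0 1).map (σ • ·) := by
  have h := Measure.pi_map_pi (μ := fun _ : Fin N => gaussianReal 0 1) (f := fun _ => (σ * ·))
    fun _ => by fun_prop
  simp only [gaussianReal_map_const_mul, mul_zero, mul_one] at h
  exact h.symm

lemma measurable_euc (n : ℕ) : Measurable (euc (n := n)) :=
  (MeasurableEquiv.toLp 2 (Fin n → ℝ)).measurable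

lemma iidGaussian_map_inner_euc {N : ℕ} (σ : ℝ) (v : EuclideanSpace ℝ (Fin N)) :
    (iidGaussian N σ).map (fun e => ⟪v, euc e⟫) = gaussianReal 0 (‖σ • v‖₊ ^ 2) := by
  have h : (fun e => ⟪v, euc e⟫) ∘ (σ • ·) = (fun x => ⟪σ • v, x⟫) ∘ WithLp.toLp 2 := by
    ext x; simp [euc, inner_smul_left, inner_smul_right]
  rw [iidGaussian_eq_map_smul, Measure.map_map (measurable_euc N).const_inner (by fun_prop), h,
    ← Measure.map_map (by fun_prop) (by fun_prop), map_pi_eq_stdGaussian, stdGaussian_map_inner]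

lemma gaussianReal_Ici_eq_gaussQ {s : ℝ≥0} (hs : 0 < s) (a : ℝ) :
    gaussianReal 0 (s ^ 2) (Set.Ici a) = gaussQ (a / s) := by
  have h := gaussianReal_map_const_mul (μ := 0) (v := 1) (s : ℝ)
  rw [mul_zero, mul_one, show NNReal.mk ((s : ℝ) ^ 2) (sq_nonneg _) = s ^ 2 by ext; simp] at h
  rw [← h, Measure.map_apply (by fun_prop) measurableSet_Ici, gaussQ]
  congr 1
  ext x
  rw [Set.mem_preimage, Set.mem_Ici, Set.mem_Ici, div_le_iff₀ (by positivity), mul_comm]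

lemma iidGaussian_setOf_le_inner_euc {N : ℕ} {σ : ℝ} (hσ : 0 < σ)
    {v : EuclideanSpace ℝ (Fin N)} (hv : v ≠ 0) (t : ℝ) :
    iidGaussian N σ {e | t ≤ ⟪euc e, v⟫} = gaussQ (t / (σ * ‖v‖)) := by
  have hm : Measurable fun e => ⟪v, euc e⟫ := (measurable_euc N).const_inner
  have hpos : 0 < ‖σ • v‖₊ := nnnorm_pos.2 (smul_ne_zero hσ.ne' hv)
  simp_rw [real_inner_comm v]
  change iidGaussian N σ ((fun e => ⟪v, euc e⟫) ⁻¹' Set.Ici t) = _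
  rw [← Measure.map_apply hm measurableSet_Ici,
    iidGaussian_map_inner_euc, gaussianReal_Ici_eq_gaussQ hpos, coe_nnnorm, norm_smul,
    Real.norm_of_nonneg hσ.le]

section
variable {ι E : Type*} [NormedAddCommGroup E] [InnerProductSpace ℝ E] (f : ι → E) {c : ℝ}
  (hcoh : ∀ i j, i ≠ j → |⟪f i, f j⟫| ≤ c) {s : Finset ι} {m : ι}
include hcoh

lemma sum_inner_le_of_notMem (hm : m ∉ s) : ∑ k ∈ s, ⟪f k, f m⟫ ≤ s.card * c := by
  rw [← nsmul_eq_mul, ← Finset.sum_const]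
  exact Finset.sum_le_sum fun k hk =>
    (le_abs_self _).trans (hcoh k m (ne_of_mem_of_not_mem hk hm))

lemma le_sum_inner_of_mem [DecidableEq ι] (hm : m ∈ s) :
    ‖f m‖ ^ 2 - (s.card - 1) * c ≤ ∑ k ∈ s, ⟪f k, f m⟫ := by
  have hrest : -(((s.card : ℝ) - 1) * c) ≤ ∑ k ∈ s.erase m, ⟪f k, f m⟫ := by
    rw [← Nat.cast_pred (Finset.card_pos.2 ⟨m, hm⟩), ← Finset.card_erase_of_mem hm,
      ← mul_neg, ← nsmul_eq_mul, ← Finset.sum_const]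
    exact Finset.sum_le_sum fun k hk =>
      neg_le_of_abs_le (hcoh k m (Finset.ne_of_mem_erase hk))
  rw [← Finset.add_sum_erase s _ hm, real_inner_self_eq_norm_sq]
  linarith

end

theorem stmt_8_general {N M : ℕ} (f : Fin M → EuclideanSpace ℝ (Fin N)) (γ μ : ℝ)
    (hγ : 0 < γ) (hnorm : ∀ i, ‖f i‖ = γ)
    (hcoh : ∀ i j, i ≠ j → |⟪f i, f j⟫| ≤ μ * γ ^ 2)
    (𝒦 : Finset (Fin M)) (K : ℕ) (hK : 1 ≤ K) (hcard : 𝒦.card = K)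
    (σ : ℝ) (hσ : 0 < σ)
    (τstar b : ℝ) (hτstar : τstar = (1 + μ) / (2 * (K : ℝ)))
    (hb : b = (γ / (2 * σ * (K : ℝ))) * (1 - (2 * (K : ℝ) - 1) * μ)) :
    (∀ m ∉ 𝒦,
      iidGaussian N σ
        {e | τstar ≤ ⟪((K : ℝ)⁻¹ • ∑ k ∈ 𝒦, f k) + euc e, f m⟫ / γ ^ 2} ≤
        gaussQ b) ∧
    (∀ m ∈ 𝒦,
      iidGaussian N σ
        {e | ⟪((K : ℝ)⁻¹ • ∑ k ∈ 𝒦, f k) + euc e, f m⟫ / γ ^ 2 < τstar} ≤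
        gaussQ b) := by
  have hK0 : (0 : ℝ) < K := by exact_mod_cast hK
  have hf0 : ∀ m, f m ≠ 0 := fun m h => hγ.ne' (by rw [← hnorm m, h, norm_zero])
  have hT : ∀ m e, ⟪(K : ℝ)⁻¹ • ∑ k ∈ 𝒦, f k + euc e, f m⟫ =
      (K : ℝ)⁻¹ * ∑ k ∈ 𝒦, ⟪f k, f m⟫ + ⟪euc e, f m⟫ := fun m e => by
    rw [inner_add_left, real_inner_smul_left, sum_inner]
  have hQ : ∀ v : EuclideanSpace ℝ (Fin N), ‖v‖ = γ →
      gaussQ (γ ^ 2 * (τstar - μ) / (σ * ‖v‖)) = gaussQ b := fun v hv => by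
    rw [hv, hb, hτstar]; congr 1; field_simp; ring
  refine ⟨fun m hm => ?_, fun m hm => ?_⟩
  · have hS := sum_inner_le_of_notMem f hcoh hm
    rw [hcard, ← inv_mul_le_iff₀ hK0] at hS
    refine (measure_mono fun e he => ?_).trans
      (iidGaussian_setOf_le_inner_euc hσ (hf0 m) _ ▸ hQ _ (hnorm m)).le
    rw [Set.mem_ofPred_eq, hT, le_div_iff₀ (by positivity)] at he
    show γ ^ 2 * (τstar - μ) ≤ ⟪euc e, f m⟫
    linarith
  · have hS := mul_le_mul_of_nonneg_left (le_sum_inner_of_mem f hcoh hm) (inv_nonneg.2 hK0.le)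
    rw [hcard, hnorm] at hS
    have hgap : τstar * γ ^ 2 - (K : ℝ)⁻¹ * (γ ^ 2 - (K - 1) * (μ * γ ^ 2)) =
        -(γ ^ 2 * (τstar - μ)) := by
      rw [hτstar]; field_simp; ring
    have hnorm_neg : ‖-f m‖ = γ := by rw [norm_neg, hnorm]
    refine (measure_mono fun e he => ?_).trans
      (iidGaussian_setOf_le_inner_euc hσ (neg_ne_zero.2 (hf0 m)) _ ▸ hQ _ hnorm_neg).le
    rw [Set.mem_ofPred_eq, hT, div_lt_iff₀ (by positivity)] at he
    show γ ^ 2 * (τstar - μ) ≤ ⟪euc e, -f m⟫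
    rw [inner_neg_right]
    linarith

theorem stmt_8 {N M : ℕ} (f : Fin M → EuclideanSpace ℝ (Fin N)) (γ μ : ℝ)
    (hγ : 0 < γ) (hμ : 0 ≤ μ) (hnorm : ∀ i, ‖f i‖ = γ)
    (hcoh : ∀ i j, i ≠ j → |⟪f i, f j⟫| ≤ μ * γ ^ 2)
    (𝒦 : Finset (Fin M)) (K : ℕ) (hK : 1 ≤ K) (hcard : 𝒦.card = K)
    (σ : ℝ) (hσ : 0 < σ)
    (τstar b : ℝ) (hτstar : τstar = (1 + μ) / (2 * (K : ℝ)))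
    (hb : b = (γ / (2 * σ * (K : ℝ))) * (1 - (2 * (K : ℝ) - 1) * μ)) :
    (∀ m ∉ 𝒦,
      iidGaussian N σ
        {e | τstar ≤ ⟪((K : ℝ)⁻¹ • ∑ k ∈ 𝒦, f k) + euc e, f m⟫ / γ ^ 2} ≤
        gaussQ b) ∧
    (∀ m ∈ 𝒦,
      iidGaussian N σ
        {e | ⟪((K : ℝ)⁻¹ • ∑ k ∈ 𝒦, f k) + euc e, f m⟫ / γ ^ 2 < τstar} ≤
        gaussQ b) :=
  stmt_8_general f γ μ hγ hnorm hcoh 𝒦 K hK hcard σ hσ τstar b hτstar hb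
end

section
/- Let f_1,…,f_M ∈ ℝ^N be the columns of a matrix F, and let 𝒦, 𝒦' ⊆ {1,…,M} be nonempty subsets. Suppose F satisfies the (|𝒦∪𝒦'|, δ)-restricted isometry property. Then ‖(1/|𝒦|) Σ_{k∈𝒦} f_k − (1/|𝒦'|) Σ_{k∈𝒦'} f_k‖² ≥ ((1−δ)/(|𝒦||𝒦'|)) · (|𝒦| + |𝒦'| − 2|𝒦∩𝒦'|). -/
open scoped RealInnerProductSpace

/-- `x` has at most `K` nonzero entries. -/
def Sparse {M : ℕ} (K : ℕ) (x : Fin M → ℝ) : Prop :=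
  (Finset.univ.filter fun i => x i ≠ 0).card ≤ K

/-- `F` satisfies the `(K, δ)`-restricted isometry property:
`(1−δ)‖x‖² ≤ ‖Fx‖² ≤ (1+δ)‖x‖²` for every `K`-sparse `x`. -/
def RIP {N M : ℕ} (K : ℕ) (δ : ℝ) (F : Matrix (Fin N) (Fin M) ℝ) : Prop :=
  ∀ x : Fin M → ℝ, Sparse K x →
    (1 - δ) * ‖euc x‖ ^ 2 ≤ ‖euc (F.mulVec x)‖ ^ 2 ∧
      ‖euc (F.mulVec x)‖ ^ 2 ≤ (1 + δ) * ‖euc x‖ ^ 2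

/-! The difference of the two averages is `F x` for `x = w_𝒦 - w_𝒦'`, where `w_S` puts weight
`1/|S|` on each index of `S`. This `x` is supported on `𝒦 ∪ 𝒦'`, so the lower RIP bound applies,
and `‖x‖² = 1/|𝒦| + 1/|𝒦'| - 2|𝒦 ∩ 𝒦'|/(|𝒦||𝒦'|)`. -/

open Finset Matrix

lemma euc_sub {n : ℕ} (v w : Fin n → ℝ) : euc (v - w) = euc v - euc w := rfl

lemma euc_mulVec {N M : ℕ} (F : Matrix (Fin N) (Fin M) ℝ) (x : Fin M → ℝ) :
    euc (F *ᵥ x) = ∑ k, x k • euc (fun n => F n k) := by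
  ext n
  simp [euc, Matrix.mulVec, dotProduct, mul_comm]

lemma norm_euc_sq {n : ℕ} (v : Fin n → ℝ) : ‖euc v‖ ^ 2 = ∑ i, v i * v i := by
  rw [EuclideanSpace.norm_sq_eq]
  simp [euc, sq]

lemma sparse_card_of_eq_zero_of_notMem {M : ℕ} {x : Fin M → ℝ} {s : Finset (Fin M)}
    (hx : ∀ i ∉ s, x i = 0) : Sparse #s x :=
  card_le_card fun i hi => by
    by_contra h
    exact (mem_filter.mp hi).2 (hx i h)

noncomputable def avgWeight {M : ℕ} (s : Finset (Fin M)) : Fin M → ℝ :=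
  fun i => if i ∈ s then (#s : ℝ)⁻¹ else 0

lemma avgWeight_eq_zero {M : ℕ} {s : Finset (Fin M)} {i : Fin M} (hi : i ∉ s) :
    avgWeight s i = 0 := if_neg hi

lemma euc_mulVec_avgWeight {N M : ℕ} (F : Matrix (Fin N) (Fin M) ℝ) (s : Finset (Fin M)) :
    euc (F *ᵥ avgWeight s) = (#s : ℝ)⁻¹ • ∑ k ∈ s, euc (fun n => F n k) := by
  simp only [euc_mulVec, avgWeight, ite_smul, zero_smul, sum_ite_mem, univ_inter, smul_sum]

lemma sum_avgWeight_mul {M : ℕ} (s t : Finset (Fin M)) :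
    ∑ i, avgWeight s i * avgWeight t i = #(s ∩ t) * ((#s : ℝ)⁻¹ * (#t : ℝ)⁻¹) := by
  simp only [avgWeight, ite_mul, mul_ite, mul_zero, zero_mul, ← ite_and, ← mem_inter,
    sum_ite_mem, univ_inter, sum_const, nsmul_eq_mul, inter_comm t s]

lemma norm_euc_avgWeight_sub_sq {M : ℕ} {s t : Finset (Fin M)} (hs : s.Nonempty)
    (ht : t.Nonempty) :
    ‖euc (avgWeight s - avgWeight t)‖ ^ 2 =
      ((#s : ℝ) + #t - 2 * #(s ∩ t)) / (#s * #t) := by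
  have hs₀ : (#s : ℝ) ≠ 0 := by positivity
  have ht₀ : (#t : ℝ) ≠ 0 := by positivity
  have expand : ∑ i, (avgWeight s - avgWeight t) i * (avgWeight s - avgWeight t) i =
      ∑ i, avgWeight s i * avgWeight s i - 2 * ∑ i, avgWeight s i * avgWeight t i +
        ∑ i, avgWeight t i * avgWeight t i := by
    simp only [mul_sum, ← sum_sub_distrib, ← sum_add_distrib, Pi.sub_apply]
    exact sum_congr rfl fun _ _ => by ring
  rw [norm_euc_sq, expand, sum_avgWeight_mul, sum_avgWeight_mul, sum_avgWeight_mul,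
    inter_self, inter_self]
  field_simp
  ring

theorem stmt_10 {N M : ℕ} (F : Matrix (Fin N) (Fin M) ℝ) (δ : ℝ)
    (𝒦 𝒦' : Finset (Fin M)) (h𝒦 : 𝒦.Nonempty) (h𝒦' : 𝒦'.Nonempty)
    (hRIP : RIP (𝒦 ∪ 𝒦').card δ F) :
    ((1 - δ) / ((𝒦.card : ℝ) * (𝒦'.card : ℝ))) *
        ((𝒦.card : ℝ) + (𝒦'.card : ℝ) - 2 * ((𝒦 ∩ 𝒦').card : ℝ)) ≤
      ‖(𝒦.card : ℝ)⁻¹ • ∑ k ∈ 𝒦, euc (fun n => F n k) -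
        (𝒦'.card : ℝ)⁻¹ • ∑ k ∈ 𝒦', euc (fun n => F n k)‖ ^ 2 := by
  have hsparse : Sparse #(𝒦 ∪ 𝒦') (avgWeight 𝒦 - avgWeight 𝒦') :=
    sparse_card_of_eq_zero_of_notMem fun i hi => by
      rw [mem_union, not_or] at hi
      simp [avgWeight_eq_zero hi.1, avgWeight_eq_zero hi.2]
  have hlower := (hRIP _ hsparse).1
  rw [norm_euc_avgWeight_sub_sq h𝒦 h𝒦', Matrix.mulVec_sub, euc_sub, euc_mulVec_avgWeight,
    euc_mulVec_avgWeight] at hlower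
  calc _ = (1 - δ) * ((#𝒦 + #𝒦' - 2 * #(𝒦 ∩ 𝒦')) / (#𝒦 * #𝒦' : ℝ)) := by ring
    _ ≤ _ := hlower
end
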